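/- arXiv:2404.01916 — 2 statements merged into one kernel-verified Lean document; each statement's English description precedes it below -/
import Mathlib

section
/- For the N-particle loss operator L_t(P¹,…,P^N) = inf{x ≥ 0 : (1/N) Σ_{i=1}^N l(t, x + P^i) ≥ 0} on ℝ^N, if l is bi-Lipschitz in y with constants 0 < κ_low < κ_up uniformly in t, then for all P, Q ∈ ℝ^N and t ∈ [0,T]: |L_t(P) - L_t(Q)| ≤ (κ_up/κ_low) · (1/N) Σ_{j=1}^N |P^j - Q^j|. -/
open Set

/-- Lipschitz continuity of the `N`-particle loss operator:
`|L_t(P) - L_t(Q)| ≤ (κ_up/κ_low) (1/N) Σ_j |P^j - Q^j|`. -/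
theorem stmt3
    (T : ℝ) (hT : 0 < T) (N : ℕ) (hN : 1 ≤ N)
    (l : ℝ → ℝ → ℝ)
    (κl κu : ℝ) (hκl : 0 < κl) (hκ : κl < κu)
    (hcont : Continuous fun p : ℝ × ℝ => l p.1 p.2)
    (hmono : ∀ t ∈ Icc (0:ℝ) T, StrictMono fun y => l t y)
    (hbilip : ∀ t ∈ Icc (0:ℝ) T, ∀ y1 y2 : ℝ,
      κl * |y1 - y2| ≤ |l t y1 - l t y2| ∧ |l t y1 - l t y2| ≤ κu * |y1 - y2|)
    (hex : ∀ t ∈ Icc (0:ℝ) T, ∀ Q : Fin N → ℝ, ∃ x : ℝ,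
      0 ≤ x ∧ 0 ≤ (1 / (N : ℝ)) * ∑ i, l t (x + Q i)) :
    ∀ t ∈ Icc (0:ℝ) T, ∀ Pp Q : Fin N → ℝ,
      |sInf {x : ℝ | 0 ≤ x ∧ 0 ≤ (1 / (N : ℝ)) * ∑ i, l t (x + Pp i)} -
        sInf {x : ℝ | 0 ≤ x ∧ 0 ≤ (1 / (N : ℝ)) * ∑ i, l t (x + Q i)}|
        ≤ (κu / κl) * ((1 / (N : ℝ)) * ∑ j, |Pp j - Q j|) := by
  intro t ht Pp Q
  have hNpos : (0:ℝ) < N := by exact_mod_cast Nat.lt_of_lt_of_le Nat.zero_lt_one hN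
  -- pointwise lower bound on differences
  have hmin : ∀ u v : ℝ, min (κl * (u - v)) (κu * (u - v)) ≤ l t u - l t v := by
    intro u v
    rcases le_total v u with h | h
    · have h1 := (hbilip t ht u v).1
      have hl : 0 ≤ l t u - l t v :=
        sub_nonneg.2 ((hmono t ht).monotone h)
      rw [abs_of_nonneg (sub_nonneg.2 h), abs_of_nonneg hl] at h1
      exact le_trans (min_le_left _ _) h1
    · have h2 := (hbilip t ht u v).2
      have habs : -(|l t u - l t v|) ≤ l t u - l t v := neg_abs_le _
      rw [abs_of_nonpos (sub_nonpos.2 h)] at h2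
      refine le_trans (min_le_right _ _) ?_
      nlinarith [abs_nonneg (l t u - l t v)]
  have key : ∀ P R : Fin N → ℝ,
      sInf {x : ℝ | 0 ≤ x ∧ 0 ≤ (1 / (N : ℝ)) * ∑ i, l t (x + P i)} ≤
      sInf {x : ℝ | 0 ≤ x ∧ 0 ≤ (1 / (N : ℝ)) * ∑ i, l t (x + R i)} +
        (κu / κl) * ((1 / (N : ℝ)) * ∑ j, |P j - R j|) := by
    intro P R
    set S : ℝ := ∑ j, |P j - R j| with hS
    have hSnn : 0 ≤ S := Finset.sum_nonneg fun j _ => abs_nonneg _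
    set δ : ℝ := (κu / κl) * ((1 / (N : ℝ)) * S) with hδdef
    have hδ : 0 ≤ δ := mul_nonneg (div_nonneg (by linarith) hκl.le) (mul_nonneg (by positivity) hSnn)
    obtain ⟨x0, hx0⟩ := hex t ht R
    have hne : Set.Nonempty {x : ℝ | 0 ≤ x ∧ 0 ≤ (1 / (N : ℝ)) * ∑ i, l t (x + R i)} :=
      ⟨x0, hx0⟩
    have hbddP : BddBelow {x : ℝ | 0 ≤ x ∧ 0 ≤ (1 / (N : ℝ)) * ∑ i, l t (x + P i)} :=
      ⟨0, fun x hx => hx.1⟩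
    have hstep : ∀ x ∈ {x : ℝ | 0 ≤ x ∧ 0 ≤ (1 / (N : ℝ)) * ∑ i, l t (x + R i)},
        sInf {x : ℝ | 0 ≤ x ∧ 0 ≤ (1 / (N : ℝ)) * ∑ i, l t (x + P i)} ≤ x + δ := by
      intro x hx
      refine csInf_le hbddP ⟨by linarith [hx.1], ?_⟩
      have hxsum : 0 ≤ ∑ i, l t (x + R i) := by
        have heq : (N:ℝ) * ((1 / (N : ℝ)) * ∑ i, l t (x + R i)) = ∑ i, l t (x + R i) := by
          field_simp
        calc (0:ℝ) ≤ (N:ℝ) * ((1 / (N : ℝ)) * ∑ i, l t (x + R i)) :=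
              mul_nonneg hNpos.le hx.2
          _ = _ := heq
      have hterm : ∀ i : Finset.univ (α := Fin N),
          True := fun _ => trivial
      have hsumge : ∑ i, (κl * δ - κu * |P i - R i|) ≤
          ∑ i, (l t ((x + δ) + P i) - l t (x + R i)) := by
        apply Finset.sum_le_sum
        intro i _
        have h1 := hmin ((x + δ) + P i) (x + R i)
        have harg : (x + δ) + P i - (x + R i) = δ + (P i - R i) := by ring
        rw [harg] at h1
        have hge : κl * δ - κu * |P i - R i| ≤
            min (κl * (δ + (P i - R i))) (κu * (δ + (P i - R i))) := by
          apply le_min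
          · nlinarith [neg_abs_le (P i - R i), abs_nonneg (P i - R i)]
          · nlinarith [neg_abs_le (P i - R i), abs_nonneg (P i - R i)]
        linarith
      have hconst : ∑ i : Fin N, (κl * δ - κu * |P i - R i|) =
          (N : ℝ) * (κl * δ) - κu * S := by
        rw [Finset.sum_sub_distrib, Finset.sum_const, ← Finset.mul_sum, hS]
        simp [mul_comm]
      have hNδ : (N : ℝ) * (κl * δ) = κu * S := by
        rw [hδdef]
        field_simp
      have hzero : (0:ℝ) ≤ ∑ i, (l t ((x + δ) + P i) - l t (x + R i)) := by
        rw [hconst, hNδ] at hsumge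
        linarith
      rw [Finset.sum_sub_distrib] at hzero
      have : 0 ≤ ∑ i, l t ((x + δ) + P i) := by linarith
      positivity
    have h2 : sInf {x : ℝ | 0 ≤ x ∧ 0 ≤ (1 / (N : ℝ)) * ∑ i, l t (x + P i)} - δ ≤
        sInf {x : ℝ | 0 ≤ x ∧ 0 ≤ (1 / (N : ℝ)) * ∑ i, l t (x + R i)} :=
      le_csInf hne (fun x hx => by have := hstep x hx; linarith)
    linarith
  have hsymm : ∑ j, |Pp j - Q j| = ∑ j, |Q j - Pp j| := by
    apply Finset.sum_congr rfl
    intro j _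
    rw [abs_sub_comm]
  rw [abs_sub_le_iff]
  constructor
  · linarith [key Pp Q]
  · have := key Q Pp
    rw [← hsymm] at this
    linarith
end

section
/- Let H(x,μ) = ∫ l(t,x+y) μ(dy) with l bi-Lipschitz in y (constants κ_low, κ_up) and κ_up-Lipschitz. Suppose ψ* and ψ̄* satisfy H(ψ*, ν) = 0 and H(ψ̄*, ν^N) = 0 for probability measures ν, ν^N with finite first moments. Then |ψ* − ψ̄*| ≤ (κ_up/κ_low) · W₁(ν^N, ν), where W₁ is the 1-Wasserstein distance. -/
/-!
Shifting the argument of `H(·, μ) = ∫ l(· + y) μ(dy)` by `d` moves its value by at least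
`κ_low |d|`, because `l` is nondecreasing with lower Lipschitz constant `κ_low`. Since
`H(ψ̄*, ν^N) = 0 = H(ψ*, ν)`, this gives `κ_low |ψ* − ψ̄*| ≤ |H(ψ*, ν^N) − H(ψ*, ν)|`, and the
right-hand side is at most `κ_up W₁(ν, ν^N)` by Kantorovich–Rubinstein duality applied to the
`κ_up`-Lipschitz function `y ↦ l(ψ* + y)`.
-/

open MeasureTheory

section ShiftedIntegral

variable {l : ℝ → ℝ} {κ : ℝ}

lemma LipschitzWith.comp_const_add {K : NNReal} (hl : LipschitzWith K l) (x : ℝ) :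
    LipschitzWith K (fun y => l (x + y)) :=
  mul_one K ▸ hl.comp (isometry_add_left x).lipschitz

lemma mul_sub_le_sub_of_monotone (hmono : Monotone l)
    (hlow : ∀ a b, κ * |a - b| ≤ |l a - l b|) {a b : ℝ} (hba : b ≤ a) :
    κ * (a - b) ≤ l a - l b := by
  have h := hlow a b
  rwa [abs_of_nonneg (sub_nonneg.2 hba), abs_of_nonneg (sub_nonneg.2 (hmono hba))] at h

lemma mul_sub_le_integral_sub_integral (hmono : Monotone l)
    (hlow : ∀ a b, κ * |a - b| ≤ |l a - l b|) (μ : Measure ℝ) [IsProbabilityMeasure μ]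
    {x x' : ℝ} (hx : Integrable (fun y => l (x + y)) μ)
    (hx' : Integrable (fun y => l (x' + y)) μ) (hx'x : x' ≤ x) :
    κ * (x - x') ≤ (∫ y, l (x + y) ∂μ) - ∫ y, l (x' + y) ∂μ := by
  have hpoint : ∀ y, κ * (x - x') ≤ l (x + y) - l (x' + y) := fun y => by
    simpa using mul_sub_le_sub_of_monotone hmono hlow (add_le_add_left hx'x y)
  calc κ * (x - x') = ∫ _, κ * (x - x') ∂μ := by simp
    _ ≤ ∫ y, (l (x + y) - l (x' + y)) ∂μ :=
        integral_mono (integrable_const _) (hx.sub hx') hpoint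
    _ = (∫ y, l (x + y) ∂μ) - ∫ y, l (x' + y) ∂μ := integral_sub hx hx'

lemma mul_abs_sub_le_abs_integral_sub_integral (hmono : Monotone l)
    (hlow : ∀ a b, κ * |a - b| ≤ |l a - l b|) (μ : Measure ℝ) [IsProbabilityMeasure μ]
    {x x' : ℝ} (hx : Integrable (fun y => l (x + y)) μ)
    (hx' : Integrable (fun y => l (x' + y)) μ) :
    κ * |x - x'| ≤ |(∫ y, l (x + y) ∂μ) - ∫ y, l (x' + y) ∂μ| := by
  wlog hx'x : x' ≤ x generalizing x x'
  · rw [abs_sub_comm, abs_sub_comm (∫ y, l (x + y) ∂μ)]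
    exact this hx' hx (le_of_not_ge hx'x)
  rw [abs_of_nonneg (sub_nonneg.2 hx'x)]
  exact (mul_sub_le_integral_sub_integral hmono hlow μ hx hx' hx'x).trans (le_abs_self _)

end ShiftedIntegral

theorem stmt14_general
    (l : ℝ → ℝ) (κl κu : ℝ) (hκl : 0 < κl) (hκ : κl ≤ κu)
    (hmono : Monotone l)
    (hbilip : ∀ y1 y2 : ℝ,
      κl * |y1 - y2| ≤ |l y1 - l y2| ∧ |l y1 - l y2| ≤ κu * |y1 - y2|)
    (ν νN : Measure ℝ) [IsProbabilityMeasure ν] [IsProbabilityMeasure νN]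
    (hint1 : ∀ x : ℝ, Integrable (fun y => l (x + y)) ν)
    (hint2 : ∀ x : ℝ, Integrable (fun y => l (x + y)) νN)
    (W1 : ℝ)
    (hdual : ∀ (g : ℝ → ℝ) (Kg : NNReal), LipschitzWith Kg g →
      Integrable g ν → Integrable g νN →
      |(∫ y, g y ∂ν) - ∫ y, g y ∂νN| ≤ (Kg : ℝ) * W1)
    (ψs ψbs : ℝ)
    (hψ : (∫ y, l (ψs + y) ∂ν) = 0)
    (hψb : (∫ y, l (ψbs + y) ∂νN) = 0) :
    |ψs - ψbs| ≤ (κu / κl) * W1 := by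
  have hl : LipschitzWith ⟨κu, hκl.le.trans hκ⟩ l :=
    LipschitzWith.of_dist_le_mul fun a b => (hbilip a b).2
  have hupper : |(∫ y, l (ψs + y) ∂ν) - ∫ y, l (ψs + y) ∂νN| ≤ κu * W1 :=
    hdual _ _ (hl.comp_const_add ψs) (hint1 ψs) (hint2 ψs)
  have hlower : κl * |ψs - ψbs| ≤ |(∫ y, l (ψs + y) ∂νN) - ∫ y, l (ψbs + y) ∂νN| :=
    mul_abs_sub_le_abs_integral_sub_integral hmono (fun a b => (hbilip a b).1) νN
      (hint2 ψs) (hint2 ψbs)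
  rw [hψ, zero_sub, abs_neg] at hupper
  rw [hψb, sub_zero] at hlower
  rw [div_mul_eq_mul_div, le_div_iff₀ hκl, mul_comm]
  exact hlower.trans hupper

/-- Stability of the root of `H(·, μ) = 0` in the measure argument:
`|ψ* − ψ̄*| ≤ (κ_up/κ_low) W₁(ν^N, ν)`, using the Kantorovich–Rubinstein dual
characterization of `W₁`. -/
theorem stmt14
    (l : ℝ → ℝ) (κl κu : ℝ) (hκl : 0 < κl) (hκ : κl ≤ κu)
    (hmeas : Measurable l)
    (hmono : Monotone l)
    (hbilip : ∀ y1 y2 : ℝ,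
      κl * |y1 - y2| ≤ |l y1 - l y2| ∧ |l y1 - l y2| ≤ κu * |y1 - y2|)
    (ν νN : Measure ℝ) [IsProbabilityMeasure ν] [IsProbabilityMeasure νN]
    (hint1 : ∀ x : ℝ, Integrable (fun y => l (x + y)) ν)
    (hint2 : ∀ x : ℝ, Integrable (fun y => l (x + y)) νN)
    (W1 : ℝ) (hW1 : 0 ≤ W1)
    (hdual : ∀ (g : ℝ → ℝ) (Kg : NNReal), LipschitzWith Kg g →
      Integrable g ν → Integrable g νN →
      |(∫ y, g y ∂ν) - ∫ y, g y ∂νN| ≤ (Kg : ℝ) * W1)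
    (ψs ψbs : ℝ)
    (hψ : (∫ y, l (ψs + y) ∂ν) = 0)
    (hψb : (∫ y, l (ψbs + y) ∂νN) = 0) :
    |ψs - ψbs| ≤ (κu / κl) * W1 :=
  stmt14_general l κl κu hκl hκ hmono hbilip ν νN hint1 hint2 W1 hdual ψs ψbs hψ hψb
end
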